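/- Let F = (Q, P) be a saturated FDFA and (x,y) a normalized pair accepted by F, with q = Q(x). Then there exist a positive integer t and an accepting state f' of P_q such that δ(q, y^t) = q, P_q(y^t) = f', and δ_q(f', y^t) = f'. -/

import Mathlib

open Classical

/-- `wpow v n` is the word `v` repeated `n` times. -/
def wpow {α : Type} (v : List α) : ℕ → List α
  | 0 => []
  | n + 1 => wpow v n ++ v

/-- The ultimately periodic infinite word `u·v^ω` (meaningful when `v ≠ []`). -/
def upWord {α : Type} [Inhabited α] (u v : List α) : ℕ → α := fun n =>
  if n < u.length then u.getD n default
  else v.getD ((n - u.length) % v.length) default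

/-- `l` is a prefix of the infinite word `w`. -/
def prefOf {α : Type} [Inhabited α] (l : List α) (w : ℕ → α) : Prop :=
  ∀ i < l.length, w i = l.getD i default

/-- A complete deterministic automaton (no acceptance condition). -/
structure DetAuto (α : Type) : Type 1 where
  State : Type
  [fin : Fintype State]
  init : State
  step : State → α → State

attribute [instance] DetAuto.fin

namespace DetAuto

variable {α : Type}

/-- The state reached from `q` after reading the finite word `w`. -/
def run (A : DetAuto α) (q : A.State) (w : List α) : A.State := w.foldl A.step q

/-- The state reached from the initial state after reading `w`. -/
def eval (A : DetAuto α) (w : List α) : A.State := A.run A.init w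

/-- The (infinite) run of `A` on an infinite word `w`. -/
def runSeq (A : DetAuto α) (w : ℕ → α) : ℕ → A.State
  | 0 => A.init
  | n + 1 => A.step (A.runSeq w n) (w n)

lemma exists_rep (A : DetAuto α) (u v : List α) :
    ∃ i, ∃ j, 1 ≤ j ∧ A.eval (u ++ wpow v i) = A.eval (u ++ wpow v (i + j)) := by
  obtain ⟨a, b, hab, hfab⟩ :=
    Finite.exists_ne_map_eq_of_infinite (fun n : ℕ => A.eval (u ++ wpow v n))
  rcases Nat.lt_or_gt_of_ne hab with h | h
  · exact ⟨a, b - a, by omega, by rw [Nat.add_sub_cancel' h.le]; exact hfab⟩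
  · exact ⟨b, a - b, by omega, by rw [Nat.add_sub_cancel' h.le]; exact hfab.symm⟩

/-- The least `i` in the normalization of `(u,v)` w.r.t. `A`. -/
noncomputable def normI (A : DetAuto α) (u v : List α) : ℕ :=
  Nat.find (A.exists_rep u v)

lemma normI_spec (A : DetAuto α) (u v : List α) :
    ∃ j, 1 ≤ j ∧ A.eval (u ++ wpow v (A.normI u v))
      = A.eval (u ++ wpow v (A.normI u v + j)) :=
  Nat.find_spec (A.exists_rep u v)

/-- The least `j` in the normalization of `(u,v)` w.r.t. `A`. -/
noncomputable def normJ (A : DetAuto α) (u v : List α) : ℕ :=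
  Nat.find (A.normI_spec u v)

/-- The normalization `(x, y) = (u·v^i, v^j)` of `(u,v)` w.r.t. `A`. -/
noncomputable def normalize (A : DetAuto α) (u v : List α) : List α × List α :=
  (u ++ wpow v (A.normI u v), wpow v (A.normJ u v))

/-- The product automaton. -/
def prod (A B : DetAuto α) : DetAuto α where
  State := A.State × B.State
  init := (A.init, B.init)
  step := fun p σ => (A.step p.1 σ, B.step p.2 σ)

end DetAuto

/-- A family of DFAs: a leading automaton and a progress DFA for each of its states. -/
structure FDFA (α : Type) : Type 1 where
  leading : DetAuto α
  pState : leading.State → Type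
  [pFin : ∀ q, Fintype (pState q)]
  pInit : ∀ q, pState q
  pStep : ∀ q, pState q → α → pState q
  pAcc : ∀ q, Set (pState q)

attribute [instance] FDFA.pFin

namespace FDFA

variable {α : Type}

/-- The progress DFA at state `q` accepts the finite word `y`. -/
def progAccept (F : FDFA α) (q : F.leading.State) (y : List α) : Prop :=
  y.foldl (F.pStep q) (F.pInit q) ∈ F.pAcc q

/-- `F` accepts the pair `(u, v)`: with `(x,y)` the normalization of `(u,v)` w.r.t.
the leading automaton, the progress DFA at the state reached on `x` accepts `y`. -/
noncomputable def Accept (F : FDFA α) (u v : List α) : Prop :=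
  F.progAccept (F.leading.eval (F.leading.normalize u v).1) (F.leading.normalize u v).2

/-- `F` is saturated: acceptance of `(u,v)` depends only on the infinite word `u·v^ω`. -/
def Saturated [Inhabited α] (F : FDFA α) : Prop :=
  ∀ u v u' v' : List α, v ≠ [] → v' ≠ [] → upWord u v = upWord u' v' →
    (F.Accept u v ↔ F.Accept u' v')

/-- The complement FDFA: same structure, complemented accepting states. -/
def compl (F : FDFA α) : FDFA α :=
  { F with pAcc := fun q => (F.pAcc q)ᶜ }

end FDFA

/-!
Write `q = Q(x)`. Normalization of `(x,y)` gives `δ(q, y) = q`, so `δ(q, y^t) = q` for every `t`,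
and therefore `(x, y^t)` is again normalized; by saturation (`x·y^ω = x·(y^t)^ω`) it is accepted,
i.e. `P_q(y^t)` is accepting. It remains to choose `t ≥ 1` so that `P_q(y^t)` is a fixed point of
reading `y^t`: the orbit of the initial state under reading `y` in the finite progress DFA
eventually cycles, and any `t` beyond the pre-period that is a multiple of the period works.
-/

open Function

theorem Finite.exists_isPeriodicPt_iterate {β : Type*} [Finite β] (f : β → β) (b : β) :
    ∃ t, 0 < t ∧ IsPeriodicPt f t (f^[t] b) := by
  obtain ⟨m, n, hmn, heq⟩ := Finite.exists_ne_map_eq_of_infinite (f^[·] b)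
  wlog hlt : m < n generalizing m n
  · exact this n m hmn.symm heq.symm (by omega)
  have hcycle : IsPeriodicPt f (n - m) (f^[m] b) := by
    change f^[n - m] (f^[m] b) = f^[m] b
    rw [← iterate_add_apply, Nat.sub_add_cancel hlt.le]
    exact heq.symm
  refine ⟨n * (n - m), Nat.mul_pos (by omega) (by omega), ?_⟩
  have hpre : m ≤ n * (n - m) := le_trans hlt.le (Nat.le_mul_of_pos_right n (by omega))
  have hsplit : f^[n * (n - m)] b = f^[n * (n - m) - m] (f^[m] b) := by
    rw [← iterate_add_apply, Nat.sub_add_cancel hpre]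
  rw [hsplit]
  exact (hcycle.const_mul n).apply_iterate _

section Words

variable {α : Type}

lemma wpow_add (v : List α) (m n : ℕ) : wpow v (m + n) = wpow v m ++ wpow v n := by
  induction n with
  | zero => simp [wpow]
  | succ n ih => simp [wpow, ih]

lemma wpow_length (v : List α) (n : ℕ) : (wpow v n).length = n * v.length := by
  induction n with
  | zero => simp [wpow]
  | succ n ih => simp [wpow, ih, Nat.succ_mul]

lemma wpow_ne_nil {v : List α} (hv : v ≠ []) {n : ℕ} (hn : n ≠ 0) : wpow v n ≠ [] := by
  obtain ⟨n, rfl⟩ := Nat.exists_eq_succ_of_ne_zero hn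
  simp [wpow, hv]

lemma foldl_wpow {β : Type*} (f : β → α → β) (b : β) (v : List α) (n : ℕ) :
    (wpow v n).foldl f b = (fun c => v.foldl f c)^[n] b := by
  induction n with
  | zero => rfl
  | succ n ih => rw [wpow, List.foldl_append, ih, iterate_succ_apply']

lemma getD_wpow (v : List α) (d : α) {n k : ℕ} (hk : k < n * v.length) :
    (wpow v n).getD k d = v.getD (k % v.length) d := by
  induction n with
  | zero => omega
  | succ n ih =>
    rw [wpow]
    rcases lt_or_ge k (n * v.length) with hlt | hge
    · rw [List.getD_append _ _ _ _ (by rwa [wpow_length]), ih hlt]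
    · have hoff : k - n * v.length < v.length := by rw [Nat.succ_mul] at hk; omega
      have hmod : k % v.length = k - n * v.length := by
        conv_lhs => rw [← Nat.sub_add_cancel hge]
        rw [Nat.add_mul_mod_self_right, Nat.mod_eq_of_lt hoff]
      rw [List.getD_append_right _ _ _ _ (by rwa [wpow_length]), wpow_length, hmod]

lemma upWord_wpow [Inhabited α] (u v : List α) {n : ℕ} (hn : n ≠ 0) :
    upWord u (wpow v n) = upWord u v := by
  funext i
  unfold upWord
  split_ifs
  · rfl
  rw [wpow_length]
  obtain hL | hL := v.length.eq_zero_or_pos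
  · rw [List.getD_eq_default _ _ (by simp [wpow_length, hL]),
      List.getD_eq_default _ _ (by simp [hL])]
  · rw [getD_wpow _ _ (Nat.mod_lt _ (Nat.mul_pos (Nat.pos_of_ne_zero hn) hL)),
      Nat.mod_mod_of_dvd _ (dvd_mul_left _ _)]

end Words

namespace DetAuto

variable {α : Type} (A : DetAuto α)

lemma eval_append (u v : List α) : A.eval (u ++ v) = A.run (A.eval u) v :=
  List.foldl_append

lemma run_wpow_of_run_eq {q : A.State} {v : List α} (h : A.run q v = q) (n : ℕ) :
    A.run q (wpow v n) = q := by
  rw [run, foldl_wpow]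
  exact iterate_fixed h n

lemma eval_normalize_append (u v : List α) :
    A.eval ((A.normalize u v).1 ++ (A.normalize u v).2) = A.eval (A.normalize u v).1 := by
  have hJ := (Nat.find_spec (A.normI_spec u v)).2
  simpa [normalize, normJ, wpow_add] using hJ.symm

lemma normalize_eq_of_eval_append {u v : List α} (h : A.eval (u ++ v) = A.eval u) :
    A.normalize u v = (u, v) := by
  have hstep : A.eval (u ++ wpow v 0) = A.eval (u ++ wpow v (0 + 1)) := by
    simpa [wpow] using h.symm
  have hI : A.normI u v = 0 := Nat.find_eq_zero _ |>.mpr ⟨1, le_rfl, hstep⟩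
  have hJ : A.normJ u v = 1 := by
    rw [normJ, Nat.find_eq_iff]
    exact ⟨⟨le_rfl, hI ▸ hstep⟩, fun m hm ⟨hpos, _⟩ => by omega⟩
  simp [normalize, hI, hJ, wpow]

end DetAuto

namespace FDFA

variable {α : Type} (F : FDFA α)

lemma accept_iff_progAccept_of_eval_append {u v : List α}
    (h : F.leading.eval (u ++ v) = F.leading.eval u) :
    F.Accept u v ↔ F.progAccept (F.leading.eval u) v := by
  rw [Accept, F.leading.normalize_eq_of_eval_append h]

end FDFA

/-- For a saturated FDFA `F` and a normalized accepted pair `(x,y)`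
with `q = Q(x)`, there are `t ≥ 1` and an accepting state `f'` of `P_q` with
`δ(q, y^t) = q`, `P_q(y^t) = f'`, and `δ_q(f', y^t) = f'`. -/
theorem accepted_pair_pumping {α : Type} [Inhabited α] (F : FDFA α) (hF : F.Saturated)
    (x y : List α) (hy : y ≠ []) (hnorm : F.leading.normalize x y = (x, y))
    (hacc : F.Accept x y) :
    ∃ t : ℕ, 1 ≤ t ∧ ∃ f' : F.pState (F.leading.eval x),
      f' ∈ F.pAcc (F.leading.eval x) ∧
      F.leading.run (F.leading.eval x) (wpow y t) = F.leading.eval x ∧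
      (wpow y t).foldl (F.pStep (F.leading.eval x)) (F.pInit (F.leading.eval x)) = f' ∧
      (wpow y t).foldl (F.pStep (F.leading.eval x)) f' = f' := by
  set A := F.leading
  set q := A.eval x
  have hloop : A.run q y = q := by
    rw [← A.eval_append]
    simpa [hnorm] using A.eval_normalize_append x y
  obtain ⟨t, ht, hperiodic⟩ :=
    Finite.exists_isPeriodicPt_iterate (fun s => y.foldl (F.pStep q) s) (F.pInit q)
  have hloop_t : A.run q (wpow y t) = q := A.run_wpow_of_run_eq hloop t
  refine ⟨t, ht, _, ?_, hloop_t, rfl, by rwa [foldl_wpow, foldl_wpow]⟩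
  have hacc_t : F.Accept x (wpow y t) :=
    (hF x y x (wpow y t) hy (wpow_ne_nil hy ht.ne') (upWord_wpow x y ht.ne').symm).mp hacc
  rwa [F.accept_iff_progAccept_of_eval_append (by rw [A.eval_append]; exact hloop_t)] at hacc_t
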